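/- arXiv:1101.0033 — 2 statements merged into one kernel-verified Lean document; each statement's English description precedes it below -/
import Mathlib

section
/- Let d, m, n ≥ 1 be integers and let a : ({1,…,d} → {1,…,n}) × ({1,…,d} → {1,…,n}) → ℂ. Let ρ and δ be ε_d-partitions of [2dm]. For functions K, L : [2dm] → {1,…,n}, write K = (k₁,…,k_{2m}) and L = (l₁,…,l_{2m}) where k_j(t) = K((j−1)d + t) and l_j(t) = L((j−1)d + t). Then Σ_{K, L : [2dm] → {1,…,n}, ker K ≥ ρ, ker L ≥ δ} |a(k₁,l₁)|·|a(k₂,l₂)|···|a(k_{2m},l_{2m})| ≤ (Σ_{k,l : {1,…,d} → {1,…,n}} |a(k,l)|²)^m. -/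
/-!
Along a block of an `ε`-partition `ε` alternates and the block is even, so the block has as many
`1`-positions as `∗`-positions; hence there is an involution `Φ` of `[2dm]` that swaps `1` and `∗`
inside each block, and `ker K ≥ ρ` forces `K ∘ Φ = K`. A `Φ`-invariant `K` is freely determined by
its values on the `1`-segments, and equally by its values on the `∗`-segments. Splitting the
product over the `2m` segments into these two halves and applying Cauchy–Schwarz over the
invariant pairs `(K, L)`, each half squared sums to `(Σ_{k,l} |a(k,l)|²)^m`.
-/

open Finset

/-- Two elements lie in the same block of the partition `P`. -/
def SameBlock {N : ℕ} (P : Finpartition (univ : Finset (Fin N))) (s t : Fin N) : Prop :=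
  ∃ B ∈ P.parts, s ∈ B ∧ t ∈ B

/-- A partition of `[N]` is non-crossing if there are no `s₁ < t₁ < s₂ < t₂` with
`s₁ ∼ s₂`, `t₁ ∼ t₂` but `s₁ ≁ t₁`. -/
def NonCrossing {N : ℕ} (P : Finpartition (univ : Finset (Fin N))) : Prop :=
  ∀ s₁ t₁ s₂ t₂ : Fin N, s₁ < t₁ → t₁ < s₂ → s₂ < t₂ →
    SameBlock P s₁ s₂ → SameBlock P t₁ t₂ → SameBlock P s₁ t₁

/-- Every block has even cardinality. -/
def EvenPartition {N : ℕ} (P : Finpartition (univ : Finset (Fin N))) : Prop :=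
  ∀ B ∈ P.parts, Even B.card

/-- The (two-valued) function `ε` alternates along each block of `P`, listed in
increasing order. -/
def Alternating {N : ℕ} (ε : Fin N → Bool) (P : Finpartition (univ : Finset (Fin N))) : Prop :=
  ∀ B ∈ P.parts, (Finset.sort B (· ≤ ·)).Chain' (fun a b => ε a ≠ ε b)

/-- An `ε`-partition: an even partition on each block of which `ε` alternates. -/
def EpsPartition {N : ℕ} (ε : Fin N → Bool) (P : Finpartition (univ : Finset (Fin N))) : Prop :=
  EvenPartition P ∧ Alternating ε P

/-- A pairing: every block has exactly two elements. -/
def IsPairing {N : ℕ} (P : Finpartition (univ : Finset (Fin N))) : Prop :=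
  ∀ B ∈ P.parts, B.card = 2

/-- `σ` refines `π`: every block of `σ` is contained in a block of `π` (i.e. `σ ≤ π`). -/
def Refines {N : ℕ} (σ π : Finpartition (univ : Finset (Fin N))) : Prop :=
  ∀ B ∈ σ.parts, ∃ C ∈ π.parts, B ⊆ C

/-- The pattern `ε_d = (1^d ∗^d)^m` on `[2dm]` (0-based; `true` codes `1`, `false` codes `∗`). -/
def epsd (d m : ℕ) : Fin (2*d*m) → Bool := fun j => decide ((j : ℕ) / d % 2 = 0)

/-- `ker I ≥ π` : the function `I` is constant on every block of `π`. -/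
def KerGe {N : ℕ} {Λ : Type*} (π : Finpartition (univ : Finset (Fin N))) (I : Fin N → Λ) : Prop :=
  ∀ B ∈ π.parts, ∀ s ∈ B, ∀ t ∈ B, I s = I t

/-- The position `(j-1)d + l` in `[2dm]`, splitting `[2dm]` into `2m` consecutive
segments of length `d`. -/
def seg (d m : ℕ) (j : Fin (2*m)) (l : Fin d) : Fin (2*d*m) :=
  ⟨j.1 * d + l.1, by
    have hj : j.1 + 1 ≤ 2*m := j.2
    have hl : l.1 < d := l.2
    calc j.1 * d + l.1 < j.1 * d + d := by linarith
      _ = (j.1 + 1) * d := by ring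
      _ ≤ (2*m) * d := Nat.mul_le_mul_right d hj
      _ = 2*d*m := by ring⟩

theorem Finset.count_map_sort_eq_card_filter {α β : Type*} [LinearOrder α] [DecidableEq β]
    (f : α → β) (s : Finset α) (b : β) :
    ((s.sort (· ≤ ·)).map f).count b = #(s.filter (f · = b)) := by
  rw [← Multiset.coe_count, ← Multiset.map_coe, Finset.sort_eq, Multiset.count_map]
  simp [Finset.card_def, eq_comm]

theorem Finset.card_filter_true_eq_card_filter_false {α : Type*} [LinearOrder α] {ε : α → Bool}
    {B : Finset α}
    (halt : (B.sort (· ≤ ·)).IsChain (fun a b => ε a ≠ ε b)) (heven : Even #B) :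
    #(B.filter (ε · = true)) = #(B.filter (ε · = false)) := by
  rw [← count_map_sort_eq_card_filter, ← count_map_sort_eq_card_filter]
  exact (((List.isChain_map ε).2 halt).count_false_eq_count_true (by simpa using heven)).symm

theorem Finpartition.card_subtype_part_eq {α : Type*} [Fintype α] [DecidableEq α]
    (P : Finpartition (univ : Finset α)) (p : α → Prop) [DecidablePred p] (B : Finset α) :
    Fintype.card {x : {s // p s} // P.part x.1 = B} =
      if B ∈ P.parts then #(B.filter p) else 0 := by
  rw [Fintype.card_congr (Equiv.subtypeSubtypeEquivSubtypeInter p (P.part · = B))]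
  split_ifs with hB
  · exact Fintype.card_of_subtype _ fun s => by simp [P.part_eq_iff_mem hB, and_comm]
  · exact Fintype.card_eq_zero_iff.2 ⟨fun ⟨s, _, hs⟩ => hB (hs ▸ P.part_mem.2 (mem_univ s))⟩

theorem EpsPartition.exists_involutive {N : ℕ} {ε : Fin N → Bool}
    {P : Finpartition (univ : Finset (Fin N))} (hP : EpsPartition ε P) :
    ∃ Φ : Fin N → Fin N, Function.Involutive Φ ∧ (∀ s, ε (Φ s) = !ε s) ∧
      ∀ s, SameBlock P s (Φ s) := by
  have hfiber (B : Finset (Fin N)) : Fintype.card {x : {s // ε s = true} // P.part x.1 = B} =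
      Fintype.card {x : {s // ε s = false} // P.part x.1 = B} := by
    rw [P.card_subtype_part_eq, P.card_subtype_part_eq]
    split_ifs with hB
    exacts [card_filter_true_eq_card_filter_false (hP.2 B hB) (hP.1 B hB), rfl]
  -- glued from blockwise bijections, so `e` preserves blocks
  let e : {s // ε s = true} ≃ {s // ε s = false} :=
    Equiv.ofFiberEquiv fun B => Fintype.equivOfCardEq (hfiber B)
  have he (x) : P.part (e x).1 = P.part x.1 :=
    Equiv.ofFiberEquiv_map (f := fun x : {s // ε s = true} => P.part x.1)
      (g := fun x : {s // ε s = false} => P.part x.1) _ x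
  refine ⟨fun s => if h : ε s = true then e ⟨s, h⟩ else e.symm ⟨s, by simpa using h⟩,
    fun s => ?_, fun s => ?_, fun s => ⟨P.part s, P.part_mem.2 (mem_univ s),
      P.mem_part_self.2 (mem_univ s), (P.part_eq_iff_mem (P.part_mem.2 (mem_univ s))).1 ?_⟩⟩
  · cases h : ε s
    · have := (e.symm ⟨s, h⟩).2
      simp_all
    · have := (e ⟨s, h⟩).2
      simp_all
  · cases h : ε s
    · simpa [h] using (e.symm ⟨s, h⟩).2
    · simpa [h] using (e ⟨s, h⟩).2
  · cases h : ε s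
    · simpa [h] using (he (e.symm ⟨s, h⟩)).symm
    · simpa [h] using he ⟨s, h⟩

theorem KerGe.comp_eq_self {N : ℕ} {Λ : Type*} {P : Finpartition (univ : Finset (Fin N))}
    {K : Fin N → Λ} (hK : KerGe P K) {Φ : Fin N → Fin N} (hΦ : ∀ s, SameBlock P s (Φ s)) :
    K ∘ Φ = K :=
  funext fun s => let ⟨B, hB, hs, hΦs⟩ := hΦ s; hK B hB _ hΦs s hs

theorem Function.Involutive.sum_filter_comp_eq_self {X Y Λ M : Type*} [Fintype X] [DecidableEq X]
    [Fintype Y] [DecidableEq Y] [Fintype Λ] [DecidableEq Λ] [AddCommMonoid M]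
    {Φ : X → X} (hΦ : Function.Involutive Φ) {ι : Y → X} (hι : Function.Injective ι)
    (hcompl : ∀ s, s ∈ Set.range ι ↔ Φ s ∉ Set.range ι) (F : (Y → Λ) → M) :
    ∑ K ∈ univ.filter (fun K : X → Λ => K ∘ Φ = K), F (K ∘ ι) = ∑ x, F x := by
  classical
  let σ := (Equiv.ofInjective ι hι).symm
  have hΦrange (s) (h : s ∉ Set.range ι) : Φ s ∈ Set.range ι := not_not.1 (mt (hcompl s).2 h)
  let extend (x : Y → Λ) (s : X) : Λ :=
    if h : s ∈ Set.range ι then x (σ ⟨s, h⟩) else x (σ ⟨Φ s, hΦrange s h⟩)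
  refine sum_nbij' (fun K => K ∘ ι) extend (by simp) (fun x _ => ?_) (fun K hK => ?_)
    (fun x _ => ?_) (fun K _ => rfl)
  · simp only [mem_filter, mem_univ, true_and]
    funext s
    by_cases h : s ∈ Set.range ι
    · have h' := (hcompl s).1 h
      simp only [Function.comp_apply, extend, dif_pos h, dif_neg h']
      congr 2
      exact Subtype.ext (hΦ s)
    · simp only [Function.comp_apply, extend, dif_pos (hΦrange s h), dif_neg h]
  · simp only [mem_filter, mem_univ, true_and] at hK
    funext s
    by_cases h : s ∈ Set.range ι
    · simp only [extend, dif_pos h, σ, Function.comp_apply, Equiv.apply_ofInjective_symm]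
    · simp only [extend, dif_neg h, σ, Function.comp_apply, Equiv.apply_ofInjective_symm]
      exact congrFun hK s
  · funext y
    simp [extend, σ]

theorem Fintype.sum_sum_prod_eq_pow {Y Z R : Type*} [Fintype Y] [Fintype Z] [CommSemiring R] (m : ℕ) (f : Y × Z → R) :
    ∑ x : Fin m → Y, ∑ y : Fin m → Z, ∏ i, f (x i, y i) = (∑ p, f p) ^ m := by
  rw [Fintype.sum_pow, ← Fintype.sum_prod_type']
  exact Fintype.sum_equiv (Equiv.arrowProdEquivProdArrow _ _ _).symm _ _ fun _ => rfl

def evenOddEquiv (m : ℕ) : Fin m × Fin 2 ≃ Fin (2 * m) :=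
  finProdFinEquiv.trans (finCongr (Nat.mul_comm m 2))

theorem evenOddEquiv_apply_val {m : ℕ} (i : Fin m) (c : Fin 2) :
    (evenOddEquiv m (i, c) : ℕ) = c + 2 * i := rfl

theorem Fin.prod_eq_prod_even_mul_prod_odd {M : Type*} [CommMonoid M] {m : ℕ} (g : Fin (2 * m) → M) :
    ∏ j, g j = (∏ i, g (evenOddEquiv m (i, 0))) * ∏ i, g (evenOddEquiv m (i, 1)) := by
  rw [← (evenOddEquiv m).prod_comp, Fintype.prod_prod_type, ← prod_mul_distrib]
  simp only [Fin.prod_univ_two]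

def segEquiv (d m : ℕ) : Fin (2 * m) × Fin d ≃ Fin (2 * d * m) :=
  finProdFinEquiv.trans (finCongr (by ring))

theorem segEquiv_apply {d m : ℕ} (j : Fin (2 * m)) (t : Fin d) :
    segEquiv d m (j, t) = seg d m j t :=
  Fin.ext <| by simp [segEquiv, seg]; ring

theorem epsd_seg {d m : ℕ} (j : Fin (2 * m)) (t : Fin d) :
    epsd d m (seg d m j t) = decide ((j : ℕ) % 2 = 0) := by
  have h : ((j : ℕ) * d + t) / d = j := by
    rw [add_comm, Nat.add_mul_div_right _ _ t.pos, Nat.div_eq_of_lt t.2, zero_add]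
  simp only [epsd, seg, h]

def halfSeg (d m : ℕ) (c : Fin 2) (it : Fin m × Fin d) : Fin (2 * d * m) :=
  seg d m (evenOddEquiv m (it.1, c)) it.2

theorem halfSeg_eq_segEquiv {d m : ℕ} (c : Fin 2) (it : Fin m × Fin d) :
    halfSeg d m c it = segEquiv d m (evenOddEquiv m (it.1, c), it.2) :=
  (segEquiv_apply _ _).symm

theorem halfSeg_injective {d m : ℕ} (c : Fin 2) : Function.Injective (halfSeg d m c) := by
  intro it it' h
  simpa [halfSeg_eq_segEquiv, Prod.ext_iff] using h

theorem epsd_halfSeg {d m : ℕ} (c : Fin 2) (it : Fin m × Fin d) :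
    epsd d m (halfSeg d m c it) = decide (c = 0) := by
  rw [halfSeg, epsd_seg, evenOddEquiv_apply_val]
  fin_cases c <;> simp [Nat.add_mod]

theorem mem_range_halfSeg_iff {d m : ℕ} (c : Fin 2) (s : Fin (2 * d * m)) :
    s ∈ Set.range (halfSeg d m c) ↔ epsd d m s = decide (c = 0) := by
  refine ⟨fun ⟨it, hit⟩ => hit ▸ epsd_halfSeg c it, fun hs => ?_⟩
  obtain ⟨⟨j, t⟩, rfl⟩ := (segEquiv d m).surjective s
  obtain ⟨⟨i, c'⟩, rfl⟩ := (evenOddEquiv m).surjective j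
  have hc : c' = c := by
    rw [← halfSeg_eq_segEquiv (it := (i, t)), epsd_halfSeg] at hs
    fin_cases c <;> fin_cases c' <;> simp_all
  exact ⟨(i, t), by rw [halfSeg_eq_segEquiv, hc]⟩

theorem sum_filter_comp_halfSeg {d m : ℕ} {Λ M : Type*} [Fintype Λ] [DecidableEq Λ]
    [AddCommMonoid M] {Φ : Fin (2 * d * m) → Fin (2 * d * m)} (hΦ : Function.Involutive Φ)
    (hΦε : ∀ s, epsd d m (Φ s) = !epsd d m s) (c : Fin 2) (F : (Fin m × Fin d → Λ) → M) :
    ∑ K ∈ univ.filter (fun K : Fin (2 * d * m) → Λ => K ∘ Φ = K), F (K ∘ halfSeg d m c) =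
      ∑ x, F x :=
  hΦ.sum_filter_comp_eq_self (halfSeg_injective c) (fun s => by
    rw [mem_range_halfSeg_iff, mem_range_halfSeg_iff, hΦε]
    cases epsd d m s <;> simp) F

def halfProd {d m n : ℕ} {R : Type*} [CommMonoid R] (w : (Fin d → Fin n) × (Fin d → Fin n) → R)
    (c : Fin 2) (K L : Fin (2 * d * m) → Fin n) : R :=
  ∏ i : Fin m, w (fun t => K (halfSeg d m c (i, t)), fun t => L (halfSeg d m c (i, t)))

theorem prod_seg_eq_halfProd_mul {d m n : ℕ} {R : Type*} [CommMonoid R]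
    (w : (Fin d → Fin n) × (Fin d → Fin n) → R) (K L : Fin (2 * d * m) → Fin n) :
    ∏ j : Fin (2 * m), w (fun t => K (seg d m j t), fun t => L (seg d m j t)) =
      halfProd w 0 K L * halfProd w 1 K L :=
  Fin.prod_eq_prod_even_mul_prod_odd _

theorem sum_halfProd {d m n : ℕ} {R : Type*} [CommSemiring R]
    {Φ Ψ : Fin (2 * d * m) → Fin (2 * d * m)} (hΦ : Function.Involutive Φ)
    (hΦε : ∀ s, epsd d m (Φ s) = !epsd d m s) (hΨ : Function.Involutive Ψ)
    (hΨε : ∀ s, epsd d m (Ψ s) = !epsd d m s)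
    (w : (Fin d → Fin n) × (Fin d → Fin n) → R) (c : Fin 2) :
    ∑ KL ∈ univ.filter (fun KL : (Fin (2 * d * m) → Fin n) × (Fin (2 * d * m) → Fin n) =>
        KL.1 ∘ Φ = KL.1 ∧ KL.2 ∘ Ψ = KL.2), halfProd w c KL.1 KL.2 =
      (∑ kl, w kl) ^ m := by
  let G (x y : Fin m × Fin d → Fin n) : R :=
    ∏ i, w (fun t => x (i, t), fun t => y (i, t))
  calc _ = ∑ K ∈ univ.filter (fun K => K ∘ Φ = K), ∑ L ∈ univ.filter (fun L => L ∘ Ψ = L),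
        G (K ∘ halfSeg d m c) (L ∘ halfSeg d m c) := by
        rw [← univ_product_univ, filter_product (fun K => K ∘ Φ = K) (fun L => L ∘ Ψ = L),
          sum_product]
        rfl
    _ = ∑ x, ∑ y, G x y := by
        simp only [sum_filter_comp_halfSeg hΨ hΨε,
          sum_filter_comp_halfSeg hΦ hΦε c (fun x => ∑ y, G x y)]
    _ = ∑ x : Fin m → Fin d → Fin n, ∑ y : Fin m → Fin d → Fin n, ∏ i, w (x i, y i) :=
        Fintype.sum_equiv (Equiv.curry _ _ _) _ _ fun x =>
          Fintype.sum_equiv (Equiv.curry _ _ _) _ _ fun y => rfl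
    _ = (∑ kl, w kl) ^ m := Fintype.sum_sum_prod_eq_pow m w

theorem bivariate_scalars_partial_sum_estimate_general (d m n : ℕ)
    (a : (Fin d → Fin n) × (Fin d → Fin n) → ℂ)
    (ρ δ : Finpartition (univ : Finset (Fin (2*d*m))))
    (hρ : EpsPartition (epsd d m) ρ) (hδ : EpsPartition (epsd d m) δ) :
    (∑ᶠ KL ∈ {KL : (Fin (2*d*m) → Fin n) × (Fin (2*d*m) → Fin n) |
          KerGe ρ KL.1 ∧ KerGe δ KL.2},
        ∏ j : Fin (2*m),
          ‖a (fun t => KL.1 (seg d m j t), fun t => KL.2 (seg d m j t))‖) ≤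
      (∑ kl : (Fin d → Fin n) × (Fin d → Fin n), ‖a kl‖ ^ 2) ^ m := by
  classical
  obtain ⟨Φ, hΦ, hΦε, hΦρ⟩ := hρ.exists_involutive
  obtain ⟨Ψ, hΨ, hΨε, hΨδ⟩ := hδ.exists_involutive
  let invariant := univ.filter fun KL : (Fin (2*d*m) → Fin n) × (Fin (2*d*m) → Fin n) =>
    KL.1 ∘ Φ = KL.1 ∧ KL.2 ∘ Ψ = KL.2
  have hsq (c : Fin 2) : ∑ KL ∈ invariant, halfProd (‖a ·‖) c KL.1 KL.2 ^ 2 =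
      (∑ kl, ‖a kl‖ ^ 2) ^ m := by
    simp only [halfProd, ← prod_pow]
    exact sum_halfProd hΦ hΦε hΨ hΨε (‖a ·‖ ^ 2) c
  rw [finsum_mem_eq_toFinset_sum, Set.toFinset_ofPred]
  calc _ ≤ ∑ KL ∈ invariant, ∏ j : Fin (2*m),
          ‖a (fun t => KL.1 (seg d m j t), fun t => KL.2 (seg d m j t))‖ :=
        sum_le_sum_of_subset_of_nonneg
          (monotone_filter_right _ fun _ _ h => ⟨h.1.comp_eq_self hΦρ, h.2.comp_eq_self hΨδ⟩)
          fun _ _ _ => by positivity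
    _ = ∑ KL ∈ invariant, halfProd (‖a ·‖) 0 KL.1 KL.2 * halfProd (‖a ·‖) 1 KL.1 KL.2 :=
        sum_congr rfl fun KL _ => prod_seg_eq_halfProd_mul (‖a ·‖) KL.1 KL.2
    _ ≤ _ := Real.sum_mul_le_sqrt_mul_sqrt _ _ _
    _ = _ := by rw [hsq, hsq, Real.mul_self_sqrt (by positivity)]

/-- bivariate estimate from the proof of Theorem 4.1 of the paper:
for `ε_d`-partitions `ρ, δ` of `[2dm]`,
`Σ_{ker K ≥ ρ, ker L ≥ δ} |a(k₁,l₁)|⋯|a(k_{2m},l_{2m})| ≤ (Σ_{k,l} |a(k,l)|²)^m`. -/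
theorem bivariate_scalars_partial_sum_estimate (d m n : ℕ) (hd : 1 ≤ d) (hm : 1 ≤ m)
    (hn : 1 ≤ n)
    (a : (Fin d → Fin n) × (Fin d → Fin n) → ℂ)
    (ρ δ : Finpartition (univ : Finset (Fin (2*d*m))))
    (hρ : EpsPartition (epsd d m) ρ) (hδ : EpsPartition (epsd d m) δ) :
    (∑ᶠ KL ∈ {KL : (Fin (2*d*m) → Fin n) × (Fin (2*d*m) → Fin n) |
          KerGe ρ KL.1 ∧ KerGe δ KL.2},
        ∏ j : Fin (2*m),
          ‖a (fun t => KL.1 (seg d m j t), fun t => KL.2 (seg d m j t))‖) ≤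
      (∑ kl : (Fin d → Fin n) × (Fin d → Fin n), ‖a kl‖ ^ 2) ^ m :=
  bivariate_scalars_partial_sum_estimate_general d m n a ρ δ hρ hδ
end

section
/- For all integers d, m ≥ 1, the number of non-crossing ε_d-partitions of [2dm] is at most 4^{2m} times the number of non-crossing ε_d-pairings of [2dm]: |NC^{ε_d}(2dm)| ≤ 4^{2m}·|NC₂^{ε_d}(2dm)|. -/
open Finset

/-!
Cut `[2dm]` into the `2m` segments of length `d`, on which `ε_d` is constant; then consecutive
elements of a block of an `ε_d`-partition `π` lie in different segments. Cutting every block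
`b₁ < ⋯ < b₂ᵣ` of `π` into the pairs `{b₂ᵢ₋₁, b₂ᵢ}` gives a non-crossing `ε_d`-pairing `σ`, and
`π` is recovered from `σ` together with its junctions `(b₂ᵢ, b₂ᵢ₊₁)`.
By non-crossingness, if `a < b` lie in one segment then `a` is the last element of its block
or `b` is the first element of its. So every segment contains at most one endpoint of
a junction, the junctions are determined by `σ` and their segments, and as arcs between
segments they form a non-crossing matching, which is determined by its sets of openers and
closers. Hence `π ↦ (σ, openers, closers)` is injective, with at most `2^{2m} · 2^{2m}` values
of the last two components.
-/

namespace Finset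

variable {α : Type*} [LinearOrder α] {B : Finset α} {x y z : α}

def Consecutive (B : Finset α) (x y : α) : Prop :=
  x ∈ B ∧ y ∈ B ∧ x < y ∧ ∀ z ∈ B, ¬(x < z ∧ z < y)

/-- The one-based position of `x` in `B`. -/
def rank (B : Finset α) (x : α) : ℕ := #{z ∈ B | z ≤ x}

/-- Junk value `x` if `x` has no successor in `B`. -/
def nextIn (B : Finset α) (x : α) : α :=
  if h : {z ∈ B | x < z}.Nonempty then {z ∈ B | x < z}.min' h else x

/-- Junk value `x` if `x` has no predecessor in `B`. -/
def prevIn (B : Finset α) (x : α) : α :=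
  if h : {z ∈ B | z < x}.Nonempty then {z ∈ B | z < x}.max' h else x

namespace Consecutive

theorem le_of_lt (h : B.Consecutive x y) (hz : z ∈ B) (hxz : x < z) : y ≤ z :=
  not_lt.1 fun hzy => h.2.2.2 z hz ⟨hxz, hzy⟩

theorem le_of_gt (h : B.Consecutive x y) (hz : z ∈ B) (hzy : z < y) : z ≤ x :=
  not_lt.1 fun hxz => h.2.2.2 z hz ⟨hxz, hzy⟩

theorem right_unique (h : B.Consecutive x y) (h' : B.Consecutive x z) : y = z :=
  le_antisymm (h.le_of_lt h'.2.1 h'.2.2.1) (h'.le_of_lt h.2.1 h.2.2.1)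

theorem left_unique (h : B.Consecutive x z) (h' : B.Consecutive y z) : x = y :=
  le_antisymm (h'.le_of_gt h.1 h.2.2.1) (h.le_of_gt h'.1 h'.2.2.1)

theorem rank_eq (h : B.Consecutive x y) : B.rank y = B.rank x + 1 := by
  have : {z ∈ B | z ≤ y} = insert y {z ∈ B | z ≤ x} := by
    ext z
    simp only [mem_filter, mem_insert]
    constructor
    · rintro ⟨hz, hzy⟩
      rcases hzy.lt_or_eq with hzy | rfl
      · exact Or.inr ⟨hz, h.le_of_gt hz hzy⟩
      · exact Or.inl rfl
    · rintro (rfl | ⟨hz, hzx⟩)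
      · exact ⟨h.2.1, le_rfl⟩
      · exact ⟨hz, hzx.trans h.2.2.1.le⟩
  rw [rank, this, card_insert_of_notMem (by simp [h.2.2.1]), rank]

end Consecutive

theorem consecutive_nextIn (hx : x ∈ B) (hz : z ∈ B) (hxz : x < z) :
    B.Consecutive x (B.nextIn x) := by
  have hne : {z ∈ B | x < z}.Nonempty := ⟨z, mem_filter.2 ⟨hz, hxz⟩⟩
  have hmem := mem_filter.1 (min'_mem _ hne)
  rw [nextIn, dif_pos hne]
  exact ⟨hx, hmem.1, hmem.2, fun w hw ⟨hxw, hwy⟩ =>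
    (min'_le _ w (mem_filter.2 ⟨hw, hxw⟩)).not_gt hwy⟩

theorem consecutive_prevIn (hx : x ∈ B) (hz : z ∈ B) (hzx : z < x) :
    B.Consecutive (B.prevIn x) x := by
  have hne : {z ∈ B | z < x}.Nonempty := ⟨z, mem_filter.2 ⟨hz, hzx⟩⟩
  have hmem := mem_filter.1 (max'_mem _ hne)
  rw [prevIn, dif_pos hne]
  exact ⟨hmem.1, hx, hmem.2, fun w hw ⟨hyw, hwx⟩ =>
    (le_max' _ w (mem_filter.2 ⟨hw, hwx⟩)).not_gt hyw⟩

theorem one_le_rank (hx : x ∈ B) : 1 ≤ B.rank x :=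
  card_pos.2 ⟨x, mem_filter.2 ⟨hx, le_rfl⟩⟩

theorem exists_gt_of_rank_lt_card (h : B.rank x < #B) : ∃ z ∈ B, x < z := by
  obtain ⟨z, hz, hzx⟩ := exists_mem_notMem_of_card_lt_card h
  exact ⟨z, hz, lt_of_not_ge fun h' => hzx (mem_filter.2 ⟨hz, h'⟩)⟩

theorem exists_lt_of_one_lt_rank (h : 1 < B.rank x) : ∃ z ∈ B, z < x := by
  obtain ⟨z, hz, hzx⟩ := exists_mem_ne h x
  exact ⟨z, (mem_filter.1 hz).1, lt_of_le_of_ne (mem_filter.1 hz).2 hzx⟩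

theorem sort_pair_of_lt (h : x < y) : ({x, y} : Finset α).sort (· ≤ ·) = [x, y] := by
  rw [sort_insert _ (by simpa using h.le) (by simpa using h.ne), sort_singleton]

theorem image_erase_of_injOn {β γ : Type*} [DecidableEq β] [DecidableEq γ] {f : β → γ}
    {C : Finset β} (hf : Set.InjOn f C) {c : β} (hc : c ∈ C) :
    (C.erase c).image f = (C.image f).erase (f c) := by
  ext a
  simp only [mem_image, mem_erase]
  constructor
  · rintro ⟨e, ⟨hec, he⟩, rfl⟩
    exact ⟨fun h => hec (hf he hc h), e, he, rfl⟩
  · rintro ⟨hne, e, he, rfl⟩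
    exact ⟨e, ⟨fun h => hne (h ▸ rfl), he⟩, rfl⟩

end Finset

theorem Alternating.ne_of_consecutive {N : ℕ} {ε : Fin N → Bool}
    {π : Finpartition (univ : Finset (Fin N))} (hA : Alternating ε π) {B : Finset (Fin N)}
    (hB : B ∈ π.parts) {x y : Fin N} (h : B.Consecutive x y) : ε x ≠ ε y := by
  set l := B.sort (· ≤ ·)
  have hl : l.SortedLT := B.sortedLT_sort
  obtain ⟨i, hi, rfl⟩ := List.mem_iff_getElem.1 ((B.mem_sort (· ≤ ·)).2 h.1)
  obtain ⟨j, hj, rfl⟩ := List.mem_iff_getElem.1 ((B.mem_sort (· ≤ ·)).2 h.2.1)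
  have hij : i < j := (hl.getElem_lt_getElem_iff).1 h.2.2.1
  have hnext : l[i + 1] = l[j] := by
    refine le_antisymm ((hl.getElem_le_getElem_iff).2 hij) (h.le_of_lt ?_ ?_)
    · exact (B.mem_sort (· ≤ ·)).1 (List.getElem_mem _)
    · exact (hl.getElem_lt_getElem_iff).2 (Nat.lt_succ_self i)
  rw [← hnext]
  exact List.isChain_iff_getElem.1 (hA B hB) i (by omega)

namespace Finpartition

variable {N : ℕ} (π : Finpartition (univ : Finset (Fin N))) {x y : Fin N}

theorem sameBlock_iff_part_eq : SameBlock π x y ↔ π.part x = π.part y := by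
  rw [SameBlock, ← mem_part_iff_exists, π.mem_part_iff_part_eq_part (mem_univ _) (mem_univ _)]

theorem sameBlock_iff_mem_part : SameBlock π x y ↔ y ∈ π.part x := by
  rw [sameBlock_iff_part_eq, π.mem_part_iff_part_eq_part (mem_univ _) (mem_univ _), eq_comm]

theorem self_mem_part (x : Fin N) : x ∈ π.part x := π.mem_part (mem_univ x)

theorem part_mem_parts (x : Fin N) : π.part x ∈ π.parts := π.part_mem.2 (mem_univ x)

/-- The partner of `x` when each block `b₁ < b₂ < ⋯ < b₂ᵣ` is cut into the pairs
`{b₂ᵢ₋₁, b₂ᵢ}`. -/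
def mate (x : Fin N) : Fin N :=
  if Odd ((π.part x).rank x) then (π.part x).nextIn x else (π.part x).prevIn x

variable {π}

theorem _root_.SameBlock.symm (h : SameBlock π x y) : SameBlock π y x :=
  (π.sameBlock_iff_part_eq).2 ((π.sameBlock_iff_part_eq).1 h).symm

theorem _root_.SameBlock.trans {z : Fin N} (hxy : SameBlock π x y) (hyz : SameBlock π y z) :
    SameBlock π x z :=
  (π.sameBlock_iff_part_eq).2 (((π.sameBlock_iff_part_eq).1 hxy).trans
    ((π.sameBlock_iff_part_eq).1 hyz))

theorem consecutive_mate_of_odd (hE : EvenPartition π) (h : Odd ((π.part x).rank x)) :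
    (π.part x).Consecutive x (π.mate x) := by
  have hlt : (π.part x).rank x < #(π.part x) := by
    refine lt_of_le_of_ne (card_filter_le _ _) fun heq => ?_
    exact Nat.not_odd_iff_even.2 (hE _ (π.part_mem_parts x)) (heq ▸ h)
  obtain ⟨z, hz, hxz⟩ := exists_gt_of_rank_lt_card hlt
  rw [mate, if_pos h]
  exact consecutive_nextIn (π.self_mem_part x) hz hxz

theorem consecutive_mate_of_not_odd (h : ¬Odd ((π.part x).rank x)) :
    (π.part x).Consecutive (π.mate x) x := by
  have hrank : 1 < (π.part x).rank x :=
    (one_le_rank (π.self_mem_part x)).lt_of_ne fun h1 => h (h1 ▸ odd_one)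
  obtain ⟨z, hz, hzx⟩ := exists_lt_of_one_lt_rank hrank
  rw [mate, if_neg h]
  exact consecutive_prevIn (π.self_mem_part x) hz hzx

theorem part_eq_of_consecutive (h : (π.part x).Consecutive x y) : π.part y = π.part x :=
  π.part_eq_of_mem (π.part_mem_parts x) h.2.1

theorem sameBlock_of_consecutive (h : (π.part x).Consecutive x y) : SameBlock π x y :=
  (π.sameBlock_iff_mem_part).2 h.2.1

theorem eq_mate_or_of_consecutive (hE : EvenPartition π) (h : (π.part x).Consecutive x y) :
    y = π.mate x ∨ π.mate x < x ∧ y < π.mate y := by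
  by_cases hx : Odd ((π.part x).rank x)
  · exact Or.inl (h.right_unique (consecutive_mate_of_odd hE hx))
  · have hy : Odd ((π.part y).rank y) := by
      rw [part_eq_of_consecutive h, h.rank_eq]
      exact (Nat.not_odd_iff_even.1 hx).add_one
    exact Or.inr ⟨(consecutive_mate_of_not_odd hx).2.2.1, (consecutive_mate_of_odd hE hy).2.2.1⟩

theorem consecutive_mate (hE : EvenPartition π) (x : Fin N) :
    (π.part x).Consecutive x (π.mate x) ∨ (π.part x).Consecutive (π.mate x) x := by
  by_cases hx : Odd ((π.part x).rank x)
  · exact Or.inl (consecutive_mate_of_odd hE hx)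
  · exact Or.inr (consecutive_mate_of_not_odd hx)

theorem mate_ne (hE : EvenPartition π) (x : Fin N) : π.mate x ≠ x := by
  rcases consecutive_mate hE x with h | h
  · exact h.2.2.1.ne'
  · exact h.2.2.1.ne

theorem sameBlock_mate (hE : EvenPartition π) (x : Fin N) : SameBlock π x (π.mate x) := by
  rw [sameBlock_iff_mem_part]
  rcases consecutive_mate hE x with h | h
  · exact h.2.1
  · exact h.1

theorem mate_mate (hE : EvenPartition π) (x : Fin N) : π.mate (π.mate x) = x := by
  have hpart := (π.sameBlock_iff_part_eq.1 (sameBlock_mate hE x)).symm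
  by_cases hx : Odd ((π.part x).rank x)
  · have h := consecutive_mate_of_odd hE hx
    have hy : ¬Odd ((π.part (π.mate x)).rank (π.mate x)) := by
      rw [hpart, h.rank_eq, Nat.odd_add_one, not_not]
      exact hx
    have h' := consecutive_mate_of_not_odd hy
    rw [hpart] at h'
    exact h'.left_unique h
  · have h := consecutive_mate_of_not_odd hx
    have hy : Odd ((π.part (π.mate x)).rank (π.mate x)) := by
      rw [hpart]
      have := h.rank_eq
      grind
    have h' := consecutive_mate_of_odd hE hy
    rw [hpart] at h'
    exact h'.right_unique h

theorem _root_.Alternating.apply_mate_ne {ε : Fin N → Bool} (hE : EvenPartition π)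
    (hA : Alternating ε π) (x : Fin N) : ε (π.mate x) ≠ ε x := by
  rcases consecutive_mate hE x with h | h
  · exact (hA.ne_of_consecutive (π.part_mem_parts x) h).symm
  · exact hA.ne_of_consecutive (π.part_mem_parts x) h

variable (π) in
def mateSetoid (hE : EvenPartition π) : Setoid (Fin N) where
  r x y := y = x ∨ y = π.mate x
  iseqv := by
    refine ⟨fun x => Or.inl rfl, ?_, ?_⟩
    · rintro x y (rfl | rfl)
      · exact Or.inl rfl
      · exact Or.inr (mate_mate hE x).symm
    · rintro x y z (rfl | rfl) (rfl | rfl)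
      · exact Or.inl rfl
      · exact Or.inr rfl
      · exact Or.inr rfl
      · exact Or.inl (mate_mate hE x)

instance (hE : EvenPartition π) : DecidableRel (π.mateSetoid hE) :=
  fun x y => inferInstanceAs (Decidable (y = x ∨ y = π.mate x))

variable (π) in
def matePairing (hE : EvenPartition π) : Finpartition (univ : Finset (Fin N)) :=
  ofSetoid (π.mateSetoid hE)

theorem sameBlock_matePairing_iff (hE : EvenPartition π) :
    SameBlock (π.matePairing hE) x y ↔ y = x ∨ y = π.mate x := by
  rw [sameBlock_iff_mem_part]
  exact mem_part_ofSetoid_iff_rel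

theorem part_matePairing (hE : EvenPartition π) (x : Fin N) :
    (π.matePairing hE).part x = {x, π.mate x} := by
  ext y
  rw [← sameBlock_iff_mem_part, sameBlock_matePairing_iff, mem_insert, mem_singleton]

theorem isPairing_matePairing (hE : EvenPartition π) : IsPairing (π.matePairing hE) := by
  intro B hB
  obtain ⟨x, hx⟩ := (π.matePairing hE).nonempty_of_mem_parts hB
  rw [← (π.matePairing hE).part_eq_of_mem hB hx, part_matePairing]
  exact card_pair (mate_ne hE x).symm

theorem alternating_matePairing {ε : Fin N → Bool} (hE : EvenPartition π)
    (hA : Alternating ε π) : Alternating ε (π.matePairing hE) := by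
  intro B hB
  obtain ⟨x, hx⟩ := (π.matePairing hE).nonempty_of_mem_parts hB
  rw [← (π.matePairing hE).part_eq_of_mem hB hx, part_matePairing]
  rcases (mate_ne hE x).lt_or_gt with h | h
  · rw [pair_comm, sort_pair_of_lt h]
    exact List.isChain_pair.2 (hA.apply_mate_ne hE x)
  · rw [sort_pair_of_lt h]
    exact List.isChain_pair.2 (hA.apply_mate_ne hE x).symm

theorem nonCrossing_matePairing (hE : EvenPartition π) (hNC : NonCrossing π) :
    NonCrossing (π.matePairing hE) := by
  intro s₁ t₁ s₂ t₂ h₁ h₂ h₃ hs ht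
  have hs₂ : s₂ = π.mate s₁ :=
    ((sameBlock_matePairing_iff hE).1 hs).resolve_left (h₁.trans h₂).ne'
  have ht₂ : t₂ = π.mate t₁ :=
    ((sameBlock_matePairing_iff hE).1 ht).resolve_left (h₂.trans h₃).ne'
  subst hs₂ ht₂
  have hst : t₁ ∈ π.part s₁ := (π.sameBlock_iff_mem_part).1
    (hNC _ _ _ _ h₁ h₂ h₃ (sameBlock_mate hE s₁) (sameBlock_mate hE t₁))
  rcases consecutive_mate hE s₁ with h | h
  · exact absurd ⟨h₁, h₂⟩ (h.2.2.2 t₁ hst)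
  · exact absurd (h₁.trans h₂) h.2.2.1.not_gt

end Finpartition

section Segments

variable {N K : ℕ} {ε : Fin N → Bool} {g : Fin N → Fin K}
  {π : Finpartition (univ : Finset (Fin N))}

theorem Alternating.apply_lt_of_consecutive (hA : Alternating ε π) (hg : Monotone g)
    (hεg : ∀ x y, g x = g y → ε x = ε y) {x y : Fin N} (h : (π.part x).Consecutive x y) :
    g x < g y :=
  (hg h.2.2.1.le).lt_of_ne fun hxy => hA.ne_of_consecutive (π.part_mem_parts x) h (hεg x y hxy)

/-- Let `a₁` be the successor of `a` and `b₀` the predecessor of `b` in their blocks. If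
`a < b` were in one segment, then `a₁` and `b₀` lie outside it, so `b₀ < a < b < a₁`, and
non-crossing puts `b` into the block of `a`, strictly between `a` and its successor. -/
theorem NonCrossing.le_of_apply_eq (hNC : NonCrossing π) (hA : Alternating ε π)
    (hg : Monotone g) (hεg : ∀ x y, g x = g y → ε x = ε y) {a a' b b' : Fin N}
    (ha : SameBlock π a a') (haa' : a < a') (hb : SameBlock π b b') (hb'b : b' < b)
    (hab : g a = g b) : b ≤ a := by
  by_contra! hlt
  have hsucc := consecutive_nextIn (π.self_mem_part a) ((π.sameBlock_iff_mem_part).1 ha) haa'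
  have hpred := consecutive_prevIn (π.self_mem_part b) ((π.sameBlock_iff_mem_part).1 hb) hb'b
  set a₁ := (π.part a).nextIn a
  set b₀ := (π.part b).prevIn b
  have hb_lt : b < a₁ := lt_of_not_ge fun h =>
    (hA.apply_lt_of_consecutive hg hεg hsucc).not_ge ((hg h).trans hab.ge)
  have hlt_a : b₀ < a := lt_of_not_ge fun h => by
    rw [← π.part_eq_of_mem (π.part_mem_parts b) hpred.1] at hpred
    exact (hA.apply_lt_of_consecutive hg hεg hpred).not_ge (hab.symm.le.trans (hg h))
  have hba : SameBlock π b₀ a := hNC _ _ _ _ hlt_a hlt hb_lt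
    ⟨_, π.part_mem_parts b, hpred.1, hpred.2.1⟩
    ⟨_, π.part_mem_parts a, hsucc.1, hsucc.2.1⟩
  have hpart : π.part a = π.part b :=
    (π.sameBlock_iff_part_eq.1 hba).symm.trans (π.part_eq_of_mem (π.part_mem_parts b) hpred.1)
  exact hsucc.2.2.2 b (hpart ▸ π.self_mem_part b) ⟨hlt, hb_lt⟩

end Segments

section Matching

variable {α : Type*} [LinearOrder α]

/-- A non-crossing partial matching on `α`, given as its set of arcs `(opener, closer)`. -/
structure IsNCMatching (C : Finset (α × α)) : Prop where
  fst_lt_snd : ∀ c ∈ C, c.1 < c.2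
  injOn_fst : Set.InjOn Prod.fst (C : Set (α × α))
  injOn_snd : Set.InjOn Prod.snd (C : Set (α × α))
  not_cross : ∀ c ∈ C, ∀ c' ∈ C, ¬(c.1 < c'.1 ∧ c'.1 < c.2 ∧ c.2 < c'.2)

namespace IsNCMatching

variable {C C' : Finset (α × α)}

theorem mono (h : IsNCMatching C) (hC' : C' ⊆ C) : IsNCMatching C' where
  fst_lt_snd c hc := h.fst_lt_snd c (hC' hc)
  injOn_fst := h.injOn_fst.mono hC'
  injOn_snd := h.injOn_snd.mono hC'
  not_cross c hc c' hc' := h.not_cross c (hC' hc) c' (hC' hc')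

theorem isGreatest_fst [DecidableEq α] (h : IsNCMatching C) {c : α × α} (hc : c ∈ C)
    (hmin : ∀ e ∈ C, c.2 ≤ e.2) :
    IsGreatest {a | a ∈ C.image Prod.fst ∧ a < c.2} c.1 := by
  refine ⟨⟨mem_image_of_mem _ hc, h.fst_lt_snd c hc⟩, ?_⟩
  rintro _ ⟨hmem, hlt⟩
  obtain ⟨e, he, rfl⟩ := mem_image.1 hmem
  by_contra! hgt
  have hne : c.2 ≠ e.2 := fun heq => hgt.ne (congrArg Prod.fst (h.injOn_snd hc he heq))
  exact h.not_cross c hc e he ⟨hgt, hlt, (hmin e he).lt_of_ne hne⟩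

theorem eq_of_image_eq [DecidableEq α] (h : IsNCMatching C) (h' : IsNCMatching C')
    (hfst : C.image Prod.fst = C'.image Prod.fst)
    (hsnd : C.image Prod.snd = C'.image Prod.snd) : C = C' := by
  induction C using strongInduction generalizing C' with
  | H C ih =>
  rcases C.eq_empty_or_nonempty with rfl | hne
  · exact (image_eq_empty.1 (hfst.symm.trans (image_empty _))).symm
  obtain ⟨c, hc, hcmin⟩ := exists_min_image C Prod.snd hne
  obtain ⟨c', hc', hcc'⟩ := mem_image.1 (hsnd ▸ mem_image_of_mem Prod.snd hc)
  have hc'min : ∀ e ∈ C', c'.2 ≤ e.2 := fun e he => by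
    obtain ⟨e₀, he₀, hee₀⟩ := mem_image.1 (hsnd.symm ▸ mem_image_of_mem Prod.snd he)
    exact hcc' ▸ hee₀ ▸ hcmin e₀ he₀
  obtain rfl : c' = c := by
    refine Prod.ext ((h'.isGreatest_fst hc' hc'min).unique ?_) hcc'
    rw [hcc', ← hfst]
    exact h.isGreatest_fst hc hcmin
  have herase : C.erase c' = C'.erase c' :=
    ih _ (erase_ssubset hc) (h.mono (erase_subset _ _)) (h'.mono (erase_subset _ _))
      (by rw [image_erase_of_injOn h.injOn_fst hc, image_erase_of_injOn h'.injOn_fst hc', hfst])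
      (by rw [image_erase_of_injOn h.injOn_snd hc, image_erase_of_injOn h'.injOn_snd hc', hsnd])
  rw [← insert_erase hc, ← insert_erase hc', herase]

end IsNCMatching

end Matching

namespace Finpartition

variable {N K : ℕ} {ε : Fin N → Bool} {g : Fin N → Fin K}
  {π π' : Finpartition (univ : Finset (Fin N))} {x y : Fin N}

variable (π) in
/-- The link from the pair of `matePairing` ending at `x` to the next pair of the block. -/
def IsJunction (x y : Fin N) : Prop := (π.part x).Consecutive x y ∧ π.mate x < x

theorem IsJunction.sameBlock (h : π.IsJunction x y) : SameBlock π x y :=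
  sameBlock_of_consecutive h.1

theorem IsJunction.lt_mate (hE : EvenPartition π) (h : π.IsJunction x y) : y < π.mate y :=
  ((eq_mate_or_of_consecutive hE h.1).resolve_left fun hy => lt_asymm h.1.2.2.1 (hy ▸ h.2)).2

variable (π) in
open Classical in
noncomputable def junctionChords (g : Fin N → Fin K) : Finset (Fin K × Fin K) :=
  (univ.filter fun p : Fin N × Fin N => π.IsJunction p.1 p.2).image (Prod.map g g)

theorem mem_junctionChords {c : Fin K × Fin K} :
    c ∈ π.junctionChords g ↔ ∃ x y, π.IsJunction x y ∧ (g x, g y) = c := by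
  simp [junctionChords]

theorem isNCMatching_junctionChords (hNC : NonCrossing π) (hE : EvenPartition π)
    (hA : Alternating ε π) (hg : Monotone g) (hεg : ∀ x y, g x = g y → ε x = ε y) :
    IsNCMatching (π.junctionChords g) where
  fst_lt_snd := by
    rintro _ hc
    obtain ⟨x, y, h, rfl⟩ := mem_junctionChords.1 hc
    exact hA.apply_lt_of_consecutive hg hεg h.1
  injOn_fst := by
    rintro _ hc _ hc' heq
    obtain ⟨x, y, h, rfl⟩ := mem_junctionChords.1 hc
    obtain ⟨x', y', h', rfl⟩ := mem_junctionChords.1 hc'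
    obtain rfl : x = x' := le_antisymm
      (hNC.le_of_apply_eq hA hg hεg h'.sameBlock h'.1.2.2.1 (sameBlock_mate hE x) h.2 heq.symm)
      (hNC.le_of_apply_eq hA hg hεg h.sameBlock h.1.2.2.1 (sameBlock_mate hE x') h'.2 heq)
    rw [h.1.right_unique h'.1]
  injOn_snd := by
    rintro _ hc _ hc' heq
    obtain ⟨x, y, h, rfl⟩ := mem_junctionChords.1 hc
    obtain ⟨x', y', h', rfl⟩ := mem_junctionChords.1 hc'
    obtain rfl : y = y' := le_antisymm
      (hNC.le_of_apply_eq hA hg hεg (sameBlock_mate hE y') (h'.lt_mate hE) h.sameBlock.symm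
        h.1.2.2.1 heq.symm)
      (hNC.le_of_apply_eq hA hg hεg (sameBlock_mate hE y) (h.lt_mate hE) h'.sameBlock.symm
        h'.1.2.2.1 heq)
    have hpart : π.part x = π.part x' :=
      (part_eq_of_consecutive h.1).symm.trans (part_eq_of_consecutive h'.1)
    rw [h.1.left_unique (hpart ▸ h'.1)]
  not_cross := by
    rintro _ hc _ hc' ⟨h₁, h₂, h₃⟩
    obtain ⟨x, y, h, rfl⟩ := mem_junctionChords.1 hc
    obtain ⟨x', y', h', rfl⟩ := mem_junctionChords.1 hc'
    have hxx' := hNC x x' y y' (hg.reflect_lt h₁) (hg.reflect_lt h₂) (hg.reflect_lt h₃)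
      h.sameBlock h'.sameBlock
    exact h.1.2.2.2 x' ((π.sameBlock_iff_mem_part).1 hxx')
      ⟨hg.reflect_lt h₁, hg.reflect_lt h₂⟩

theorem mate_eq_of_matePairing_eq (hE : EvenPartition π) (hE' : EvenPartition π')
    (h : π.matePairing hE = π'.matePairing hE') : π.mate = π'.mate := by
  funext x
  have hmem : π.mate x ∈ ({x, π'.mate x} : Finset (Fin N)) := by
    rw [← part_matePairing hE', ← h, part_matePairing]
    exact mem_insert_of_mem (mem_singleton_self _)
  exact mem_singleton.1 ((mem_insert.1 hmem).resolve_left (mate_ne hE x))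

theorem IsJunction.of_junctionChords_eq (hNC : NonCrossing π) (hE : EvenPartition π)
    (hA : Alternating ε π) (hNC' : NonCrossing π') (hE' : EvenPartition π')
    (hA' : Alternating ε π') (hg : Monotone g) (hεg : ∀ x y, g x = g y → ε x = ε y)
    (hmate : π.mate = π'.mate) (hch : π.junctionChords g = π'.junctionChords g)
    (h : π.IsJunction x y) : π'.IsJunction x y := by
  obtain ⟨x', y', h', hxy⟩ :=
    mem_junctionChords.1 (hch ▸ mem_junctionChords.2 ⟨x, y, h, rfl⟩)
  obtain ⟨hgx, hgy⟩ := Prod.ext_iff.1 hxy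
  obtain rfl : x' = x := le_antisymm
    (hNC.le_of_apply_eq hA hg hεg h.sameBlock h.1.2.2.1 (sameBlock_mate hE x')
      (hmate ▸ h'.2) hgx.symm)
    (hNC'.le_of_apply_eq hA' hg hεg h'.sameBlock h'.1.2.2.1 (sameBlock_mate hE' x)
      (hmate ▸ h.2) hgx)
  obtain rfl : y' = y := le_antisymm
    (hNC'.le_of_apply_eq hA' hg hεg (sameBlock_mate hE' y) (hmate ▸ h.lt_mate hE)
      h'.sameBlock.symm h'.1.2.2.1 hgy.symm)
    (hNC.le_of_apply_eq hA hg hεg (sameBlock_mate hE y') (hmate ▸ h'.lt_mate hE')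
      h.sameBlock.symm h.1.2.2.1 hgy)
  exact h'

theorem le_of_forall_consecutive_sameBlock
    (H : ∀ x y, (π.part x).Consecutive x y → SameBlock π' x y) : π ≤ π' := by
  have key : ∀ y x, SameBlock π x y → x ≤ y → SameBlock π' x y := by
    intro y
    induction y using WellFoundedLT.induction with
    | ind y ih =>
    intro x hxy hle
    rcases hle.lt_or_eq with hlt | rfl
    · have hx : x ∈ π.part y := (π.sameBlock_iff_mem_part).1 hxy.symm
      obtain ⟨w, hw⟩ : ∃ w, (π.part y).Consecutive w y :=
        ⟨_, consecutive_prevIn (π.self_mem_part y) hx hlt⟩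
      have hw' := hw
      rw [← π.part_eq_of_mem (π.part_mem_parts y) hw.1] at hw'
      exact (ih _ hw.2.2.1 x (hxy.trans (sameBlock_of_consecutive hw').symm)
        (hw.le_of_gt hx hlt)).trans (H _ _ hw')
    · exact ⟨_, π'.part_mem_parts x, π'.self_mem_part x, π'.self_mem_part x⟩
  intro B hB
  have hne := π.nonempty_of_mem_parts hB
  refine ⟨_, π'.part_mem_parts (B.min' hne), fun y hy => (π'.sameBlock_iff_mem_part).1 ?_⟩
  exact key y _ ⟨B, hB, B.min'_mem hne, hy⟩ (B.min'_le y hy)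

theorem le_of_mate_eq_of_junctionChords_eq (hNC : NonCrossing π) (hE : EvenPartition π)
    (hA : Alternating ε π) (hNC' : NonCrossing π') (hE' : EvenPartition π')
    (hA' : Alternating ε π') (hg : Monotone g) (hεg : ∀ x y, g x = g y → ε x = ε y)
    (hmate : π.mate = π'.mate) (hch : π.junctionChords g = π'.junctionChords g) : π ≤ π' :=
  le_of_forall_consecutive_sameBlock fun x y h => by
    rcases eq_mate_or_of_consecutive hE h with rfl | ⟨hx, -⟩
    · exact hmate ▸ sameBlock_mate hE' x
    · exact (IsJunction.of_junctionChords_eq hNC hE hA hNC' hE' hA' hg hεg hmate hch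
        ⟨h, hx⟩).sameBlock

theorem eq_of_matePairing_eq_of_junctionChords_eq (hNC : NonCrossing π) (hE : EvenPartition π)
    (hA : Alternating ε π) (hNC' : NonCrossing π') (hE' : EvenPartition π')
    (hA' : Alternating ε π') (hg : Monotone g) (hεg : ∀ x y, g x = g y → ε x = ε y)
    (hσ : π.matePairing hE = π'.matePairing hE')
    (hch : π.junctionChords g = π'.junctionChords g) : π = π' := by
  have hmate := mate_eq_of_matePairing_eq hE hE' hσ
  exact le_antisymm (le_of_mate_eq_of_junctionChords_eq hNC hE hA hNC' hE' hA' hg hεg hmate hch)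
    (le_of_mate_eq_of_junctionChords_eq hNC' hE' hA' hNC hE hA hg hεg hmate.symm hch.symm)

end Finpartition

open Finpartition in
theorem card_nonCrossing_epsPartition_le {N K : ℕ} {ε : Fin N → Bool} {g : Fin N → Fin K}
    (hg : Monotone g) (hεg : ∀ x y, g x = g y → ε x = ε y) :
    Nat.card {P : Finpartition (univ : Finset (Fin N)) // NonCrossing P ∧ EpsPartition ε P} ≤
      4 ^ K * Nat.card {P : Finpartition (univ : Finset (Fin N)) //
        NonCrossing P ∧ IsPairing P ∧ Alternating ε P} := by
  classical
  let F : {P : Finpartition (univ : Finset (Fin N)) // NonCrossing P ∧ EpsPartition ε P} →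
      {P : Finpartition (univ : Finset (Fin N)) //
        NonCrossing P ∧ IsPairing P ∧ Alternating ε P} × Finset (Fin K) × Finset (Fin K) :=
    fun P =>
    (⟨P.1.matePairing P.2.2.1, nonCrossing_matePairing _ P.2.1, isPairing_matePairing _,
        alternating_matePairing _ P.2.2.2⟩,
      (P.1.junctionChords g).image Prod.fst, (P.1.junctionChords g).image Prod.snd)
  have hF : Function.Injective F := by
    rintro ⟨P, hNC, hE, hA⟩ ⟨Q, hNC', hE', hA'⟩ hPQ
    simp only [F, Prod.mk.injEq, Subtype.mk.injEq] at hPQ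
    obtain ⟨hσ, hfst, hsnd⟩ := hPQ
    refine Subtype.ext (eq_of_matePairing_eq_of_junctionChords_eq hNC hE hA hNC' hE' hA' hg hεg
      hσ ?_)
    exact (isNCMatching_junctionChords hNC hE hA hg hεg).eq_of_image_eq
      (isNCMatching_junctionChords hNC' hE' hA' hg hεg) hfst hsnd
  calc _ ≤ Nat.card (_ × Finset (Fin K) × Finset (Fin K)) := Nat.card_le_card_of_injective F hF
    _ = _ := by
      rw [Nat.card_prod, Nat.card_prod, Nat.card_eq_fintype_card (α := Finset (Fin K)),
        Fintype.card_finset, Fintype.card_fin, show 4 ^ K = 2 ^ K * 2 ^ K by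
          rw [← mul_pow]; norm_num]
      ring

def segmentIndex (d m : ℕ) (j : Fin (2 * d * m)) : Fin (2 * m) :=
  ⟨j / d, Nat.div_lt_of_lt_mul (by linarith [j.2])⟩

theorem segmentIndex_monotone (d m : ℕ) : Monotone (segmentIndex d m) :=
  fun _ _ hij => Nat.div_le_div_right (Fin.le_def.1 hij)

theorem card_eps_partitions_le_pairings_general (d m : ℕ) :
    Nat.card {P : Finpartition (univ : Finset (Fin (2*d*m))) //
        NonCrossing P ∧ EpsPartition (epsd d m) P} ≤
      4^(2*m) * Nat.card {P : Finpartition (univ : Finset (Fin (2*d*m))) //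
        NonCrossing P ∧ IsPairing P ∧ Alternating (epsd d m) P} :=
  card_nonCrossing_epsPartition_le (segmentIndex_monotone d m) fun x y hxy => by
    simp only [epsd, show (x : ℕ) / d = y / d from Fin.val_eq_of_eq hxy]

/-- cardinality assertion of Proposition 3.5 of the paper:
`|NC^{ε_d}(2dm)| ≤ 4^{2m}·|NC₂^{ε_d}(2dm)|`. -/
theorem card_eps_partitions_le_pairings (d m : ℕ) (hd : 1 ≤ d) (hm : 1 ≤ m) :
    Nat.card {P : Finpartition (univ : Finset (Fin (2*d*m))) //
        NonCrossing P ∧ EpsPartition (epsd d m) P} ≤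
      4^(2*m) * Nat.card {P : Finpartition (univ : Finset (Fin (2*d*m))) //
        NonCrossing P ∧ IsPairing P ∧ Alternating (epsd d m) P} :=
  card_eps_partitions_le_pairings_general d m
end
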